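/- arXiv:1003.5501 — 4 statements merged into one kernel-verified Lean document; each statement's English description precedes it below -/
import Mathlib

section
/- For every real ν, every smooth function f : ℂ → ℂ, and every z ∈ ℂ with 1 + κ|z|² > 0, one has (∇_{ν+κ}(∇*_{ν+κ} f))(z) = (L_κ^ν f)(z) − ν f(z). -/
open Complex MeasureTheory Filter

/-- Wirtinger derivative ∂f/∂z = (1/2)(∂f/∂x − i ∂f/∂y). -/
noncomputable def wderiv (f : ℂ → ℂ) (z : ℂ) : ℂ :=
  (fderiv ℝ f z 1 - Complex.I * fderiv ℝ f z Complex.I) / 2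

/-- Anti-holomorphic Wirtinger derivative ∂f/∂z̄ = (1/2)(∂f/∂x + i ∂f/∂y). -/
noncomputable def wderivBar (f : ℂ → ℂ) (z : ℂ) : ℂ :=
  (fderiv ℝ f z 1 + Complex.I * fderiv ℝ f z Complex.I) / 2

/-- Twisted Laplacian L_κ^ν. -/
noncomputable def twistedLap (κ ν : ℝ) (f : ℂ → ℂ) (z : ℂ) : ℂ :=
  -(((1 + κ * Complex.normSq z : ℝ) : ℂ) ^ 2 * wderiv (wderivBar f) z
    + (ν : ℂ) * ((1 + κ * Complex.normSq z : ℝ) : ℂ) *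
        (z * wderiv f z - (starRingEnd ℂ) z * wderivBar f z)
    - (ν : ℂ) ^ 2 * ((Complex.normSq z : ℝ) : ℂ) * f z)

/-- (∇_α f)(z) = −(1+κ|z|²) ∂f/∂z + α z̄ f(z). -/
noncomputable def nabla (κ α : ℝ) (f : ℂ → ℂ) (z : ℂ) : ℂ :=
  -((1 + κ * Complex.normSq z : ℝ) : ℂ) * wderiv f z + (α : ℂ) * (starRingEnd ℂ) z * f z

/-- (∇*_α f)(z) = (1+κ|z|²) ∂f/∂z̄ + (α−κ) z f(z). -/
noncomputable def nablaStar (κ α : ℝ) (f : ℂ → ℂ) (z : ℂ) : ℂ :=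
  ((1 + κ * Complex.normSq z : ℝ) : ℂ) * wderivBar f z + ((α - κ : ℝ) : ℂ) * z * f z

/-- ∇_{ν+κ} ∘ ∇_{ν+2κ} ∘ ⋯ ∘ ∇_{ν+mκ} (the identity when m = 0). -/
noncomputable def nablaChain (κ : ℝ) : ℕ → ℝ → (ℂ → ℂ) → (ℂ → ℂ)
  | 0, _, f => f
  | m + 1, ν, f => nabla κ (ν + κ) (nablaChain κ m (ν + κ) f)

/-- (D g)(z) = (1+κ|z|²)² ∂g/∂z. -/
noncomputable def Dop (κ : ℝ) (g : ℂ → ℂ) (z : ℂ) : ℂ :=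
  ((1 + κ * Complex.normSq z : ℝ) : ℂ) ^ 2 * wderiv g z

/-- Generalized binomial coefficient C(r,k) for real r. -/
noncomputable def genBinom (r : ℝ) (k : ℕ) : ℝ :=
  (∏ i ∈ Finset.range k, (r - i)) / (Nat.factorial k)

/-- Jacobi polynomial P_j^{(a,b)}(x) with real parameters a, b. -/
noncomputable def jacobiP (a b : ℝ) (j : ℕ) (x : ℝ) : ℝ :=
  ∑ s ∈ Finset.range (j + 1),
    genBinom ((j : ℝ) + a) (j - s) * genBinom ((j : ℝ) + b) s *
      ((x - 1) / 2) ^ s * ((x + 1) / 2) ^ (j - s)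

/-- Pochhammer symbol (a)_n = a(a+1)⋯(a+n−1). -/
noncomputable def risingFactorial (a : ℝ) (n : ℕ) : ℝ :=
  ∏ i ∈ Finset.range n, (a + i)

/-! Both sides are second-order expressions in `f`; expanding `∂(∇*_{ν+κ} f)` by the product
rule, the weight contributes `∂(1 + κ z z̄) = κ z̄` and the zeroth-order term `ν z f` contributes
`ν f`, which is the shift `- ν f`. The rest is polynomial algebra in `z`, `z̄`. -/

open ComplexConjugate

section Wirtinger

variable {f g : ℂ → ℂ} {z : ℂ}

lemma wderiv_add (hf : DifferentiableAt ℝ f z) (hg : DifferentiableAt ℝ g z) :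
    wderiv (fun w => f w + g w) z = wderiv f z + wderiv g z := by
  simp only [wderiv, fderiv_fun_add hf hg, add_apply]
  ring

lemma wderiv_mul (hf : DifferentiableAt ℝ f z) (hg : DifferentiableAt ℝ g z) :
    wderiv (fun w => f w * g w) z = wderiv f z * g z + f z * wderiv g z := by
  simp only [wderiv, fderiv_fun_mul hf hg, add_apply, smul_apply, smul_eq_mul]
  ring

lemma wderiv_const (c : ℂ) : wderiv (fun _ => c) z = 0 := by
  simp [wderiv]

lemma wderiv_id : wderiv (fun w => w) z = 1 := by
  simp [wderiv]

lemma wderiv_conj : wderiv (fun w => conj w) z = 0 := by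
  have hD : fderiv ℝ (fun w => conj w) z = conjCLE.toContinuousLinearMap :=
    conjCLE.toContinuousLinearMap.hasFDerivAt.fderiv
  simp [wderiv, hD]

lemma wderiv_mul_conj_self : wderiv (fun w => w * conj w) z = conj z := by
  have hconj : DifferentiableAt ℝ (fun w => conj w) z := conjCLE.differentiableAt
  rw [wderiv_mul differentiableAt_fun_id hconj, wderiv_id, wderiv_conj]
  ring

end Wirtinger

lemma ContDiff.differentiable_wderivBar {f : ℂ → ℂ} (hf : ContDiff ℝ 2 f) :
    Differentiable ℝ (wderivBar f) := by
  have hDf : ContDiff ℝ 1 (fderiv ℝ f) := hf.fderiv_right (by norm_num)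
  have hDf_apply (v : ℂ) : Differentiable ℝ (fun z => fderiv ℝ f z v) :=
    (hDf.clm_apply contDiff_const).differentiable one_ne_zero
  unfold wderivBar
  fun_prop

lemma ofReal_one_add_mul_normSq (κ : ℝ) (w : ℂ) :
    ((1 + κ * normSq w : ℝ) : ℂ) = 1 + κ * (w * conj w) := by
  push_cast
  rw [mul_conj]

lemma differentiable_one_add_mul_normSq (κ : ℝ) :
    Differentiable ℝ (fun w => ((1 + κ * normSq w : ℝ) : ℂ)) := by
  simp only [ofReal_one_add_mul_normSq]
  fun_prop

lemma wderiv_one_add_mul_normSq (κ : ℝ) (z : ℂ) :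
    wderiv (fun w => ((1 + κ * normSq w : ℝ) : ℂ)) z = κ * conj z := by
  simp only [ofReal_one_add_mul_normSq]
  rw [wderiv_add (differentiableAt_const _) (by fun_prop), wderiv_const,
    wderiv_mul (differentiableAt_const _) (by fun_prop), wderiv_const, wderiv_mul_conj_self]
  ring

lemma wderiv_nablaStar {κ α : ℝ} {f : ℂ → ℂ} {z : ℂ} (hf : DifferentiableAt ℝ f z)
    (hf' : DifferentiableAt ℝ (wderivBar f) z) :
    wderiv (nablaStar κ α f) z =
      κ * conj z * wderivBar f z + ((1 + κ * normSq z : ℝ) : ℂ) * wderiv (wderivBar f) z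
        + ((α - κ : ℝ) : ℂ) * (f z + z * wderiv f z) := by
  have hlin : DifferentiableAt ℝ (fun w : ℂ => ((α - κ : ℝ) : ℂ) * w) z := by fun_prop
  have hweight := (differentiable_one_add_mul_normSq κ).differentiableAt (x := z)
  change wderiv (fun w => ((1 + κ * normSq w : ℝ) : ℂ) * wderivBar f w
    + ((α - κ : ℝ) : ℂ) * w * f w) z = _
  rw [wderiv_add (hweight.fun_mul hf') (hlin.fun_mul hf), wderiv_mul hweight hf',
    wderiv_mul hlin hf, wderiv_one_add_mul_normSq, wderiv_mul (differentiableAt_const _) differentiableAt_fun_id,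
    wderiv_const, wderiv_id]
  ring

theorem stmt0_general (κ ν : ℝ) (f : ℂ → ℂ) (hf : ContDiff ℝ (⊤ : ℕ∞) f)
    (z : ℂ) :
    nabla κ (ν + κ) (nablaStar κ (ν + κ) f) z = twistedLap κ ν f z - (ν : ℂ) * f z := by
  have hf₂ : ContDiff ℝ 2 f := hf.of_le (WithTop.coe_le_coe.2 le_top)
  rw [nabla, wderiv_nablaStar (hf₂.differentiable (by norm_num)).differentiableAt
      (hf₂.differentiable_wderivBar z), nablaStar, twistedLap, ofReal_one_add_mul_normSq,
    ← mul_conj]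
  push_cast
  ring

theorem stmt0 (κ ν : ℝ) (f : ℂ → ℂ) (hf : ContDiff ℝ (⊤ : ℕ∞) f)
    (z : ℂ) (hz : 0 < 1 + κ * Complex.normSq z) :
    nabla κ (ν + κ) (nablaStar κ (ν + κ) f) z = twistedLap κ ν f z - (ν : ℂ) * f z :=
  stmt0_general κ ν f hf z
end

section
/- For every real ν, every smooth function f : ℂ → ℂ, and every z ∈ ℂ with 1 + κ|z|² > 0, one has (∇*_{ν+κ}(∇_{ν+κ} f))(z) = (L_κ^{ν+κ} f)(z) + (ν+κ) f(z). -/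
open Complex MeasureTheory Filter

/-! Expand `∇*_α (∇_α f)` with the Wirtinger product rule. Since `∂̄(1 + κ|z|²) = κ z` and
`∂̄∂f = ∂∂̄f` (symmetry of the second derivative), the second- and first-order terms are those of
`L_κ^α f`, while the zeroth-order terms add up to `α(1 + κ|z|²) + (α - κ)α|z|² - α²|z|² = α`. -/

open ComplexConjugate

section Wirtinger

variable {f g : ℂ → ℂ} {z : ℂ}

theorem wderivBar_add (hf : DifferentiableAt ℝ f z) (hg : DifferentiableAt ℝ g z) :
    wderivBar (fun w => f w + g w) z = wderivBar f z + wderivBar g z := by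
  simp only [wderivBar, fderiv_fun_add hf hg, add_apply]
  ring

theorem wderivBar_neg : wderivBar (fun w => -f w) z = -wderivBar f z := by
  simp only [wderivBar, fderiv_fun_neg, neg_apply]
  ring

theorem wderivBar_mul (hf : DifferentiableAt ℝ f z) (hg : DifferentiableAt ℝ g z) :
    wderivBar (fun w => f w * g w) z = wderivBar f z * g z + f z * wderivBar g z := by
  simp only [wderivBar, fderiv_fun_mul hf hg, add_apply, smul_apply, smul_eq_mul]
  ring

theorem wderivBar_const (c : ℂ) : wderivBar (fun _ => c) z = 0 := by
  simp [wderivBar]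

theorem wderivBar_id : wderivBar (fun w => w) z = 0 := by
  simp [wderivBar]

theorem wderivBar_conj : wderivBar (fun w => conj w) z = 1 := by
  have : fderiv ℝ (fun w => conj w) z = (conjCLE : ℂ →L[ℝ] ℂ) := conjCLE.fderiv
  simp [wderivBar, this]

theorem wderivBar_weight (κ : ℝ) :
    wderivBar (fun w => ((1 + κ * normSq w : ℝ) : ℂ)) z = κ * z := by
  simp_rw [ofReal_add, ofReal_mul, ← mul_conj]
  simp (disch := fun_prop) only [wderivBar_add, wderivBar_mul, wderivBar_const, wderivBar_id,
    wderivBar_conj]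
  ring

theorem hasFDerivAt_fderiv_apply (hf : DifferentiableAt ℝ (fderiv ℝ f) z) (v : ℂ) :
    HasFDerivAt (fun w => fderiv ℝ f w v) ((fderiv ℝ (fderiv ℝ f) z).flip v) z := by
  simpa using hf.hasFDerivAt.clm_apply (hasFDerivAt_const v z)

theorem hasFDerivAt_wderiv (hf : DifferentiableAt ℝ (fderiv ℝ f) z) :
    HasFDerivAt (wderiv f) ((2 : ℂ)⁻¹ •
      ((fderiv ℝ (fderiv ℝ f) z).flip 1 - I • (fderiv ℝ (fderiv ℝ f) z).flip I)) z := by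
  have hwderiv : wderiv f = fun w => (2 : ℂ)⁻¹ * (fderiv ℝ f w 1 - I * fderiv ℝ f w I) := by
    ext w
    rw [wderiv, div_eq_inv_mul]
  rw [hwderiv]
  exact ((hasFDerivAt_fderiv_apply hf 1).sub
    ((hasFDerivAt_fderiv_apply hf I).const_mul I)).const_mul _

theorem hasFDerivAt_wderivBar (hf : DifferentiableAt ℝ (fderiv ℝ f) z) :
    HasFDerivAt (wderivBar f) ((2 : ℂ)⁻¹ •
      ((fderiv ℝ (fderiv ℝ f) z).flip 1 + I • (fderiv ℝ (fderiv ℝ f) z).flip I)) z := by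
  have hwderivBar : wderivBar f = fun w => (2 : ℂ)⁻¹ * (fderiv ℝ f w 1 + I * fderiv ℝ f w I) := by
    ext w
    rw [wderivBar, div_eq_inv_mul]
  rw [hwderivBar]
  exact ((hasFDerivAt_fderiv_apply hf 1).add
    ((hasFDerivAt_fderiv_apply hf I).const_mul I)).const_mul _

theorem wderivBar_wderiv (hf : ContDiffAt ℝ 2 f z) :
    wderivBar (wderiv f) z = wderiv (wderivBar f) z := by
  have hf' : DifferentiableAt ℝ (fderiv ℝ f) z :=
    (hf.fderiv_right le_rfl).differentiableAt one_ne_zero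
  have hsymm : fderiv ℝ (fderiv ℝ f) z 1 I = fderiv ℝ (fderiv ℝ f) z I 1 :=
    hf.isSymmSndFDerivAt (by simp) 1 I
  -- both sides are `(D²f z 1 1 + D²f z I I) / 4` once the mixed partials agree
  simp only [wderivBar, wderiv, (hasFDerivAt_wderiv hf').fderiv,
    (hasFDerivAt_wderivBar hf').fderiv]
  simp only [smul_apply, sub_apply, add_apply, ContinuousLinearMap.flip_apply, smul_eq_mul, hsymm]
  ring

theorem wderivBar_nabla (κ α : ℝ) (hf : DifferentiableAt ℝ f z)
    (hf' : DifferentiableAt ℝ (wderiv f) z) :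
    wderivBar (nabla κ α f) z =
      -(κ * z * wderiv f z + ((1 + κ * normSq z : ℝ) : ℂ) * wderivBar (wderiv f) z)
        + α * f z + α * conj z * wderivBar f z := by
  have hρ : DifferentiableAt ℝ (fun w => ((1 + κ * normSq w : ℝ) : ℂ)) z := by
    simp_rw [ofReal_add, ofReal_mul, ← mul_conj]
    fun_prop
  change wderivBar (fun w => -((1 + κ * normSq w : ℝ) : ℂ) * wderiv f w + α * conj w * f w) z = _
  simp (disch := fun_prop) only [wderivBar_add, wderivBar_mul, wderivBar_neg, wderivBar_weight,
    wderivBar_const, wderivBar_conj]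
  ring

theorem nablaStar_nabla (κ α : ℝ) (hf : ContDiffAt ℝ 2 f z) :
    nablaStar κ α (nabla κ α f) z = twistedLap κ α f z + α * f z := by
  have hf' : DifferentiableAt ℝ (fderiv ℝ f) z :=
    (hf.fderiv_right le_rfl).differentiableAt one_ne_zero
  rw [nablaStar, wderivBar_nabla κ α (hf.differentiableAt two_ne_zero)
    (hasFDerivAt_wderiv hf').differentiableAt, wderivBar_wderiv hf, twistedLap, nabla]
  push_cast
  rw [← mul_conj]
  ring

end Wirtinger

theorem stmt1_general (κ ν : ℝ) (f : ℂ → ℂ) (hf : ContDiff ℝ (⊤ : ℕ∞) f)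
    (z : ℂ) :
    nablaStar κ (ν + κ) (nabla κ (ν + κ) f) z
      = twistedLap κ (ν + κ) f z + ((ν + κ : ℝ) : ℂ) * f z :=
  nablaStar_nabla κ (ν + κ) (hf.contDiffAt.of_le (WithTop.coe_le_coe.mpr le_top))

theorem stmt1 (κ ν : ℝ) (f : ℂ → ℂ) (hf : ContDiff ℝ (⊤ : ℕ∞) f)
    (z : ℂ) (hz : 0 < 1 + κ * Complex.normSq z) :
    nablaStar κ (ν + κ) (nabla κ (ν + κ) f) z
      = twistedLap κ (ν + κ) f z + ((ν + κ : ℝ) : ℂ) * f z :=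
  stmt1_general κ ν f hf z
end

section
/- Assume κ ≠ 0, let ν be real, and let m, n ≥ 0 be integers. Define Φ_{m,n}(z) = (∇_{ν+κ} ∘ ∇_{ν+2κ} ∘ ⋯ ∘ ∇_{ν+mκ})[w ↦ (1+κ|w|²)^{−(ν/κ+m)} w^n](z) on Ω = {z : 1+κ|z|² > 0} (the composition being the identity when m = 0). Then (L_κ^ν Φ_{m,n})(z) = (ν(2m+1) + m(m+1)κ) · Φ_{m,n}(z) for every z ∈ Ω. -/
open Complex MeasureTheory Filter

/-!
On `Ω` all functions in sight have the form `(1 + κ|z|²)^r P(z, z̄)` with `P` a polynomial in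
`z` and `z̄`, and for fixed `r` the operators `∂`, `∂̄`, `∇_α` and `L_κ^ν` act on them through
explicit operators on `P`. The theorem thereby becomes polynomial algebra: the intertwining
relation `L^ν ∇_{ν+κ} = ∇_{ν+κ} (L^{ν+κ} + 2ν + κ)`, and `L^ν P = ν P` for holomorphic `P` when
`r κ = -ν`. With `r = -(ν/κ + m)` fixed, induction on `m` gives the eigenvalue
`ν(2m+1) + m(m+1)κ`.
-/

open MvPolynomial ComplexConjugate Topology

theorem MvPolynomial.pderiv_pderiv_comm {σ R : Type*} [CommSemiring R] (i j : σ)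
    (p : MvPolynomial σ R) : pderiv i (pderiv j p) = pderiv j (pderiv i p) := by
  classical
  induction p using MvPolynomial.induction_on with
  | C a => simp
  | add p q hp hq => simp [hp, hq]
  | mul_X p k hp =>
    simp only [pderiv_mul, map_add, hp, pderiv_X]
    by_cases hi : i = k <;> by_cases hj : j = k <;> simp [hi, hj]

noncomputable def wirtingerCLM (a b : ℂ) : ℂ →L[ℝ] ℂ :=
  a • ContinuousLinearMap.id ℝ ℂ + b • conjCLE.toContinuousLinearMap

@[simp]
lemma wirtingerCLM_apply (a b v : ℂ) : wirtingerCLM a b v = a * v + b * conj v := by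
  simp [wirtingerCLM]

lemma wirtingerCLM_add (a b c d : ℂ) :
    wirtingerCLM (a + c) (b + d) = wirtingerCLM a b + wirtingerCLM c d :=
  ContinuousLinearMap.ext fun v => by simp only [wirtingerCLM_apply, add_apply]; ring

lemma smul_wirtingerCLM (c a b : ℂ) : c • wirtingerCLM a b = wirtingerCLM (c * a) (c * b) :=
  ContinuousLinearMap.ext fun v => by simp only [wirtingerCLM_apply, smul_apply, smul_eq_mul]; ring

lemma HasFDerivAt.wderiv_eq {f : ℂ → ℂ} {a b z : ℂ} (h : HasFDerivAt f (wirtingerCLM a b) z) :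
    wderiv f z = a := by
  rw [wderiv, h.fderiv, wirtingerCLM_apply, wirtingerCLM_apply, map_one, conj_I]
  linear_combination ((b - a) / 2) * I_sq

lemma HasFDerivAt.wderivBar_eq {f : ℂ → ℂ} {a b z : ℂ}
    (h : HasFDerivAt f (wirtingerCLM a b) z) : wderivBar f z = b := by
  rw [wderivBar, h.fderiv, wirtingerCLM_apply, wirtingerCLM_apply, map_one, conj_I]
  linear_combination ((a - b) / 2) * I_sq

lemma Filter.EventuallyEq.wderiv_eq {f g : ℂ → ℂ} {z : ℂ} (h : f =ᶠ[𝓝 z] g) :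
    wderiv f z = wderiv g z := by
  rw [wderiv, wderiv, h.fderiv_eq]

lemma Filter.EventuallyEq.wderivBar_eq {f g : ℂ → ℂ} {z : ℂ} (h : f =ᶠ[𝓝 z] g) :
    wderivBar f z = wderivBar g z := by
  rw [wderivBar, wderivBar, h.fderiv_eq]

lemma Filter.EventuallyEq.nabla_eq {κ α : ℝ} {f g : ℂ → ℂ} {z : ℂ} (h : f =ᶠ[𝓝 z] g) :
    nabla κ α f z = nabla κ α g z := by
  rw [nabla, nabla, h.wderiv_eq, h.eq_of_nhds]

lemma Filter.EventuallyEq.twistedLap_eq {κ ν : ℝ} {f g : ℂ → ℂ} {z : ℂ} (h : f =ᶠ[𝓝 z] g) :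
    twistedLap κ ν f z = twistedLap κ ν g z := by
  have hbar : wderivBar f =ᶠ[𝓝 z] wderivBar g :=
    h.eventuallyEq_nhds.mono fun _ hw => hw.wderivBar_eq
  rw [twistedLap, twistedLap, h.wderiv_eq, h.wderivBar_eq, hbar.wderiv_eq, h.eq_of_nhds]

/-- Polynomials in `X 0 = z` and `X 1 = z̄`, evaluated at `z`. -/
noncomputable def evalConj (z : ℂ) : MvPolynomial (Fin 2) ℂ →+* ℂ := eval ![z, conj z]

@[simp] lemma evalConj_C (z a : ℂ) : evalConj z (C a) = a := eval_C a
@[simp] lemma evalConj_X_zero (z : ℂ) : evalConj z (X 0) = z := eval_X ..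
@[simp] lemma evalConj_X_one (z : ℂ) : evalConj z (X 1) = conj z := eval_X ..

lemma hasFDerivAt_evalConj_X (i : Fin 2) (z : ℂ) :
    HasFDerivAt (fun w => evalConj w (X i))
      (wirtingerCLM (evalConj z (pderiv 0 (X i))) (evalConj z (pderiv 1 (X i)))) z := by
  fin_cases i
  · refine ((hasFDerivAt_id z).congr_fderiv ?_).congr_of_eventuallyEq (.of_forall fun w => ?_)
    · exact ContinuousLinearMap.ext fun v => by simp [pderiv_X]
    · simp
  · refine (conjCLE.toContinuousLinearMap.hasFDerivAt.congr_fderiv ?_).congr_of_eventuallyEq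
      (.of_forall fun w => ?_)
    · exact ContinuousLinearMap.ext fun v => by simp [pderiv_X]
    · simp

lemma hasFDerivAt_evalConj (P : MvPolynomial (Fin 2) ℂ) (z : ℂ) :
    HasFDerivAt (fun w => evalConj w P)
      (wirtingerCLM (evalConj z (pderiv 0 P)) (evalConj z (pderiv 1 P))) z := by
  induction P using MvPolynomial.induction_on with
  | C a =>
    refine ((hasFDerivAt_const a z).congr_fderiv ?_).congr_of_eventuallyEq (.of_forall fun w => ?_)
    · exact ContinuousLinearMap.ext fun v => by simp
    · simp
  | add p q hp hq =>
    simp only [map_add, wirtingerCLM_add]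
    exact hp.add hq
  | mul_X p i hp =>
    refine ((hp.mul (hasFDerivAt_evalConj_X i z)).congr_fderiv ?_).congr_of_eventuallyEq
      (.of_forall fun w => map_mul ..)
    simp only [pderiv_mul, map_add, map_mul, smul_wirtingerCLM, ← wirtingerCLM_add]
    congr 1 <;> ring

lemma hasFDerivAt_rpow_weight {κ : ℝ} (r : ℝ) {z : ℂ} (hz : 1 + κ * normSq z ≠ 0) :
    HasFDerivAt (fun w : ℂ => (((1 + κ * normSq w) ^ r : ℝ) : ℂ))
      (wirtingerCLM (((r * κ * (1 + κ * normSq z) ^ (r - 1) : ℝ) : ℂ) * conj z)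
        (((r * κ * (1 + κ * normSq z) ^ (r - 1) : ℝ) : ℂ) * z)) z := by
  have hweight : HasFDerivAt (fun w : ℂ => 1 + κ * normSq w) (κ • 2 • innerSL ℝ z) z := by
    simpa [normSq_eq_norm_sq] using ((hasFDerivAt_id z).norm_sq.const_smul κ).const_add 1
  refine (ofRealCLM.hasFDerivAt.comp z
    ((Real.hasDerivAt_rpow_const (.inl hz)).comp_hasFDerivAt z hweight)).congr_fderiv ?_
  refine ContinuousLinearMap.ext fun v => ?_
  have hinner : ((2 * inner ℝ z v : ℝ) : ℂ) = conj z * v + z * conj v := by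
    rw [Complex.inner, ofReal_mul, re_eq_add_conj]
    simp only [map_mul, conj_conj]
    push_cast
    ring
  simp only [ContinuousLinearMap.comp_apply, ofRealCLM_apply, smul_apply, smul_eq_mul,
    innerSL_apply_apply, nsmul_eq_mul, wirtingerCLM_apply]
  push_cast at hinner ⊢
  linear_combination (r * κ * (((1 + κ * normSq z) ^ (r - 1) : ℝ) : ℂ)) * hinner

lemma ofReal_rpow_weight_eq_mul {κ : ℝ} (r : ℝ) {z : ℂ} (hz : 1 + κ * normSq z ≠ 0) :
    (((1 + κ * normSq z) ^ r : ℝ) : ℂ)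
      = (((1 + κ * normSq z) ^ (r - 1) : ℝ) : ℂ) * ((1 + κ * normSq z : ℝ) : ℂ) := by
  rw [← ofReal_mul, Real.rpow_sub_one hz, div_mul_cancel₀ _ hz]

noncomputable def weighted (κ r : ℝ) (P : MvPolynomial (Fin 2) ℂ) (z : ℂ) : ℂ :=
  (((1 + κ * normSq z) ^ r : ℝ) : ℂ) * evalConj z P

noncomputable def weightPoly (κ : ℝ) : MvPolynomial (Fin 2) ℂ := 1 + C (κ : ℂ) * X 0 * X 1

@[simp]
lemma evalConj_weightPoly (κ : ℝ) (z : ℂ) :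
    evalConj z (weightPoly κ) = ((1 + κ * normSq z : ℝ) : ℂ) := by
  simp [weightPoly, mul_assoc, mul_conj]

noncomputable def wderivPoly (κ r : ℝ) (P : MvPolynomial (Fin 2) ℂ) : MvPolynomial (Fin 2) ℂ :=
  C ((r * κ : ℝ) : ℂ) * X 1 * P + weightPoly κ * pderiv 0 P

noncomputable def wderivBarPoly (κ r : ℝ) (P : MvPolynomial (Fin 2) ℂ) :
    MvPolynomial (Fin 2) ℂ :=
  C ((r * κ : ℝ) : ℂ) * X 0 * P + weightPoly κ * pderiv 1 P

lemma hasFDerivAt_weighted {κ : ℝ} (r : ℝ) (P : MvPolynomial (Fin 2) ℂ) {z : ℂ}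
    (hz : 1 + κ * normSq z ≠ 0) :
    HasFDerivAt (weighted κ r P)
      (wirtingerCLM (weighted κ (r - 1) (wderivPoly κ r P) z)
        (weighted κ (r - 1) (wderivBarPoly κ r P) z)) z := by
  refine ((hasFDerivAt_rpow_weight r hz).mul (hasFDerivAt_evalConj P z)).congr_fderiv ?_
  simp only [smul_wirtingerCLM, ← wirtingerCLM_add, weighted, wderivPoly, wderivBarPoly, map_add,
    map_mul, evalConj_C, evalConj_X_zero, evalConj_X_one, evalConj_weightPoly,
    ofReal_rpow_weight_eq_mul r hz]
  congr 1 <;> push_cast [← mul_conj] <;> ring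

lemma wderiv_weighted {κ : ℝ} (r : ℝ) (P : MvPolynomial (Fin 2) ℂ) {z : ℂ}
    (hz : 1 + κ * normSq z ≠ 0) :
    wderiv (weighted κ r P) z = weighted κ (r - 1) (wderivPoly κ r P) z :=
  (hasFDerivAt_weighted r P hz).wderiv_eq

lemma wderivBar_weighted {κ : ℝ} (r : ℝ) (P : MvPolynomial (Fin 2) ℂ) {z : ℂ}
    (hz : 1 + κ * normSq z ≠ 0) :
    wderivBar (weighted κ r P) z = weighted κ (r - 1) (wderivBarPoly κ r P) z :=
  (hasFDerivAt_weighted r P hz).wderivBar_eq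

lemma eventually_weight_ne_zero {κ : ℝ} {z : ℂ} (hz : 1 + κ * normSq z ≠ 0) :
    ∀ᶠ w in 𝓝 z, 1 + κ * normSq w ≠ 0 :=
  (continuous_const.add (continuous_const.mul continuous_normSq)).continuousAt.eventually_ne hz

noncomputable def nablaPoly (κ α r : ℝ) (P : MvPolynomial (Fin 2) ℂ) : MvPolynomial (Fin 2) ℂ :=
  C ((α - r * κ : ℝ) : ℂ) * X 1 * P - weightPoly κ * pderiv 0 P

lemma nabla_weighted {κ : ℝ} (α r : ℝ) (P : MvPolynomial (Fin 2) ℂ) {z : ℂ}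
    (hz : 1 + κ * normSq z ≠ 0) :
    nabla κ α (weighted κ r P) z = weighted κ r (nablaPoly κ α r P) z := by
  simp only [nabla, wderiv_weighted r P hz, weighted, nablaPoly, wderivPoly, map_add, map_sub,
    map_mul, evalConj_C, evalConj_X_one, evalConj_weightPoly, ofReal_rpow_weight_eq_mul r hz]
  push_cast [← mul_conj]
  ring

noncomputable def twistedLapPoly (κ ν r : ℝ) (P : MvPolynomial (Fin 2) ℂ) :
    MvPolynomial (Fin 2) ℂ :=
  -(wderivPoly κ (r - 1) (wderivBarPoly κ r P)
    + C (ν : ℂ) * (X 0 * wderivPoly κ r P - X 1 * wderivBarPoly κ r P)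
    - C ((ν : ℂ) ^ 2) * X 0 * X 1 * P)

lemma twistedLap_weighted {κ : ℝ} (ν r : ℝ) (P : MvPolynomial (Fin 2) ℂ) {z : ℂ}
    (hz : 1 + κ * normSq z ≠ 0) :
    twistedLap κ ν (weighted κ r P) z = weighted κ r (twistedLapPoly κ ν r P) z := by
  have hbar : wderivBar (weighted κ r P) =ᶠ[𝓝 z] weighted κ (r - 1) (wderivBarPoly κ r P) :=
    (eventually_weight_ne_zero hz).mono fun _ hw => wderivBar_weighted r P hw
  simp only [twistedLap, hbar.wderiv_eq, wderiv_weighted _ _ hz, wderivBar_weighted r P hz,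
    weighted, twistedLapPoly, map_neg, map_add, map_sub, map_mul, map_pow, evalConj_C,
    evalConj_X_zero, evalConj_X_one, ofReal_rpow_weight_eq_mul r hz,
    ofReal_rpow_weight_eq_mul (r - 1) hz]
  push_cast [← mul_conj]
  ring

lemma twistedLapPoly_nablaPoly (κ ν r : ℝ) (P : MvPolynomial (Fin 2) ℂ) :
    twistedLapPoly κ ν r (nablaPoly κ (ν + κ) r P)
      = nablaPoly κ (ν + κ) r (twistedLapPoly κ (ν + κ) r P)
        + C ((2 * ν + κ : ℝ) : ℂ) * nablaPoly κ (ν + κ) r P := by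
  simp only [twistedLapPoly, nablaPoly, wderivPoly, wderivBarPoly, weightPoly, map_add, map_sub,
    map_neg, pderiv_mul, pderiv_C, pderiv_one, pderiv_X_self, pderiv_pderiv_comm 1 0 P,
    pderiv_X_of_ne (one_ne_zero (α := Fin 2)), pderiv_X_of_ne (zero_ne_one (α := Fin 2)), mul_zero, zero_mul, add_zero, zero_add, mul_one]
  simp only [ofReal_add, ofReal_sub, ofReal_mul, ofReal_one, ofReal_ofNat, map_add, map_sub,
    map_mul, map_pow, map_one, map_ofNat]
  ring

lemma twistedLapPoly_of_pderiv_one_eq_zero {κ ν r : ℝ} (hr : r * κ = -ν)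
    {P : MvPolynomial (Fin 2) ℂ} (hP : pderiv 1 P = 0) :
    twistedLapPoly κ ν r P = C (ν : ℂ) * P := by
  simp only [twistedLapPoly, wderivPoly, wderivBarPoly, weightPoly, sub_mul, one_mul, hr, hP,
    pderiv_mul, pderiv_C, pderiv_X_self, mul_zero, zero_mul, add_zero, zero_add, mul_one]
  simp only [ofReal_neg, ofReal_sub, map_neg, map_sub, map_pow]
  ring

noncomputable def chainPoly (κ : ℝ) :
    ℕ → ℝ → ℝ → MvPolynomial (Fin 2) ℂ → MvPolynomial (Fin 2) ℂ
  | 0, _, _, P => P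
  | m + 1, ν, r, P => nablaPoly κ (ν + κ) r (chainPoly κ m (ν + κ) r P)

lemma nablaPoly_C_mul (κ α r : ℝ) (c : ℂ) (P : MvPolynomial (Fin 2) ℂ) :
    nablaPoly κ α r (C c * P) = C c * nablaPoly κ α r P := by
  simp only [nablaPoly, pderiv_C_mul]
  ring

lemma twistedLapPoly_chainPoly {κ : ℝ} (m : ℕ) {ν r : ℝ} (hr : r * κ = -(ν + m * κ))
    {P : MvPolynomial (Fin 2) ℂ} (hP : pderiv 1 P = 0) :
    twistedLapPoly κ ν r (chainPoly κ m ν r P)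
      = C ((ν * (2 * m + 1) + m * (m + 1) * κ : ℝ) : ℂ) * chainPoly κ m ν r P := by
  induction m generalizing ν with
  | zero => simpa [chainPoly] using twistedLapPoly_of_pderiv_one_eq_zero (by simpa using hr) hP
  | succ m ih =>
    have hr' : r * κ = -(ν + κ + m * κ) := by push_cast at hr; linarith
    rw [chainPoly, twistedLapPoly_nablaPoly, ih hr', nablaPoly_C_mul, ← add_mul, ← map_add]
    congr 3
    push_cast
    ring

lemma nablaChain_weighted (κ : ℝ) (m : ℕ) (ν r : ℝ) (P : MvPolynomial (Fin 2) ℂ) {z : ℂ}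
    (hz : 1 + κ * normSq z ≠ 0) :
    nablaChain κ m ν (weighted κ r P) z = weighted κ r (chainPoly κ m ν r P) z := by
  induction m generalizing ν z with
  | zero => rfl
  | succ m ih =>
    have hchain : nablaChain κ m (ν + κ) (weighted κ r P)
        =ᶠ[𝓝 z] weighted κ r (chainPoly κ m (ν + κ) r P) :=
      (eventually_weight_ne_zero hz).mono fun _ hw => ih _ hw
    rw [nablaChain, hchain.nabla_eq, nabla_weighted _ _ _ hz, chainPoly]

theorem stmt12 (κ : ℝ) (hκ : κ ≠ 0) (ν : ℝ) (m n : ℕ)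
    (z : ℂ) (hz : 0 < 1 + κ * Complex.normSq z) :
    twistedLap κ ν
        (nablaChain κ m ν
          (fun w => (((1 + κ * Complex.normSq w) ^ (-(ν / κ + m)) : ℝ) : ℂ) * w ^ n)) z
      = ((ν * (2 * m + 1) + m * (m + 1) * κ : ℝ) : ℂ) *
          nablaChain κ m ν
            (fun w => (((1 + κ * Complex.normSq w) ^ (-(ν / κ + m)) : ℝ) : ℂ) * w ^ n) z := by
  set r : ℝ := -(ν / κ + m)
  have hr : r * κ = -(ν + m * κ) := by simp only [r]; field_simp
  have hbase : (fun w => (((1 + κ * normSq w) ^ r : ℝ) : ℂ) * w ^ n) = weighted κ r (X 0 ^ n) := by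
    ext1 w; simp [weighted]
  have hchain : nablaChain κ m ν (weighted κ r (X 0 ^ n))
      =ᶠ[𝓝 z] weighted κ r (chainPoly κ m ν r (X 0 ^ n)) :=
    (eventually_weight_ne_zero hz.ne').mono fun _ hw => nablaChain_weighted κ m ν r _ hw
  rw [hbase, hchain.twistedLap_eq, hchain.eq_of_nhds, twistedLap_weighted ν r _ hz.ne',
    twistedLapPoly_chainPoly m hr (by simp [pderiv_X]), weighted, weighted, map_mul, evalConj_C]
  ring
end

section
/- Assume κ ≠ 0, let ν be real, let m ≥ 0 be an integer, and for each integer n ≥ 0 define Φ_{m,n}(z) = (∇_{ν+κ} ∘ ∇_{ν+2κ} ∘ ⋯ ∘ ∇_{ν+mκ})[w ↦ (1+κ|w|²)^{−(ν/κ+m)} w^n](z) on Ω = {z : 1+κ|z|² > 0} (the composition being the identity when m = 0). If n ≠ n′ and the function z ↦ Φ_{m,n}(z) · conj(Φ_{m,n′}(z)) · (1+κ|z|²)^{−2} is Lebesgue-integrable on Ω, then ∫_Ω Φ_{m,n}(z) · conj(Φ_{m,n′}(z)) · (1+κ|z|²)^{−2} dλ(z) = 0, where dλ is Lebesgue measure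 on ℂ ≅ ℝ². -/
open Complex MeasureTheory Filter

/-!
Rotations `z ↦ u z` with `|u| = 1` preserve Lebesgue measure and `Ω`, and they intertwine
`∇_α`: `∂/∂z` is complex-homogeneous, so if `f (u z) = u ^ k f z` then
`(∇_α f)(u z) = u ^ (k - 1) (∇_α f)(z)`.
Hence `Φ_{m,n}(u z) = u ^ (n - m) Φ_{m,n}(z)`, the integrand is multiplied by `u ^ (n - n')`, and
a `u` with `u ^ (n - n') ≠ 1` shows that the integral equals a nontrivial multiple of itself.
-/
-- `L 1 - I * L I` is twice the `∂/∂z`-part of `L`; precomposing with `c * ·` scales it by `c`.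
lemma ContinuousLinearMap.map_mul_sub_I_mul_map_mul_I (L : ℂ →L[ℝ] ℂ) (c : ℂ) :
    L c - I * L (c * I) = c * (L 1 - I * L I) := by
  obtain ⟨a, b, rfl⟩ : ∃ a b : ℝ, c = a + b * I := ⟨c.re, c.im, (re_add_im c).symm⟩
  have hc : L (a + b * I) = a • L 1 + b • L I := by
    rw [← L.map_smul, ← L.map_smul, ← map_add]
    simp
  have hcI : L ((a + b * I) * I) = (-b) • L 1 + a • L I := by
    rw [← L.map_smul, ← L.map_smul, ← map_add]
    congr 1
    apply Complex.ext <;> simp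
  rw [hc, hcI]
  simp only [real_smul, ofReal_neg]
  linear_combination (b * L I) * I_mul_I

lemma wderiv_const_mul (a : ℂ) (f : ℂ → ℂ) (z : ℂ) :
    wderiv (fun w => a * f w) z = a * wderiv f z := by
  have h : fderiv ℝ (fun w => a * f w) z = a • fderiv ℝ f z :=
    congrFun (fderiv_const_smul_field (𝕜 := ℝ) a (f := f)) z
  simp only [wderiv, h, _root_.smul_apply, smul_eq_mul]
  ring

lemma wderiv_comp_circle_mul (u : Circle) (f : ℂ → ℂ) (z : ℂ) :
    wderiv (fun w => f (u * w)) z = u * wderiv f (u * z) := by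
  have h : fderiv ℝ (fun w => f (u * w)) z =
      (fderiv ℝ f (u * z)).comp (rotation u : ℂ →L[ℝ] ℂ) :=
    (rotation u).toContinuousLinearEquiv.comp_right_fderiv
  simp only [wderiv, h, ContinuousLinearMap.comp_apply, ContinuousLinearEquiv.coe_coe,
    LinearIsometryEquiv.coe_toContinuousLinearEquiv, rotation_apply, mul_one,
    ContinuousLinearMap.map_mul_sub_I_mul_map_mul_I]
  ring

section RotationHomogeneous

variable {u : Circle} {k : ℤ} {f : ℂ → ℂ}

lemma wderiv_circle_mul_of_homogeneous (hf : ∀ z, f (u * z) = u ^ k * f z) (z : ℂ) :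
    wderiv f (u * z) = u ^ (k - 1) * wderiv f z := by
  have h := wderiv_comp_circle_mul u f z
  simp only [hf, wderiv_const_mul] at h
  rw [zpow_sub_one₀ (Circle.coe_ne_zero u), mul_right_comm, h]
  field_simp

lemma nabla_circle_mul_of_homogeneous (κ α : ℝ) (hf : ∀ z, f (u * z) = u ^ k * f z)
    (z : ℂ) : nabla κ α f (u * z) = u ^ (k - 1) * nabla κ α f z := by
  simp only [nabla, Circle.normSq_coe, one_mul, map_mul, ← Circle.coe_inv_eq_conj,
    Circle.coe_inv, hf z, wderiv_circle_mul_of_homogeneous hf z,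
    zpow_sub_one₀ (Circle.coe_ne_zero u)]
  ring

lemma nablaChain_circle_mul_of_homogeneous (κ : ℝ) (m : ℕ) (ν : ℝ)
    (hf : ∀ z, f (u * z) = u ^ k * f z) (z : ℂ) :
    nablaChain κ m ν f (u * z) = u ^ (k - m) * nablaChain κ m ν f z := by
  induction m generalizing ν z with
  | zero => simpa [nablaChain] using hf z
  | succ m ih =>
    rw [nablaChain, nabla_circle_mul_of_homogeneous _ _ (ih (ν + κ)), sub_sub, Nat.cast_succ]

end RotationHomogeneous

lemma radial_mul_pow_circle_mul (g : ℝ → ℂ) (n : ℕ) (u : Circle) (z : ℂ) :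
    g (normSq (u * z)) * (u * z) ^ n = u ^ (n : ℤ) * (g (normSq z) * z ^ n) := by
  rw [map_mul, Circle.normSq_coe, one_mul, mul_pow, zpow_natCast]
  ring

lemma Circle.exists_coe_zpow_ne_one {d : ℤ} (hd : d ≠ 0) :
    ∃ u : Circle, (u : ℂ) ^ d ≠ 1 := by
  refine ⟨Circle.exp (Real.pi / d), ?_⟩
  rw [← Circle.coe_zpow, ← Circle.exp_intCast_mul, mul_div_cancel₀ _ (Int.cast_ne_zero.2 hd)]
  exact fun h => Circle.exp_pi_ne_one (Circle.coe_eq_one.1 h)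

lemma setIntegral_eq_zero_of_circle_mul {E : Type*} [NormedAddCommGroup E] [NormedSpace ℂ E]
    {G : ℂ → E} {S : Set ℂ} (u : Circle) {a : ℂ} (ha : a ≠ 1)
    (hS : ∀ z : ℂ, u * z ∈ S ↔ z ∈ S) (hG : ∀ z, G (u * z) = a • G z) :
    ∫ z in S, G z = 0 := by
  have hpre : rotation u ⁻¹' S = S := Set.ext fun z => by simp [rotation_apply, hS]
  have h : ∫ z in S, G z = a • ∫ z in S, G z :=
    calc ∫ z in S, G z = ∫ z in rotation u ⁻¹' S, G (rotation u z) := by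
          rw [(rotation u).measurePreserving.setIntegral_preimage_emb
            (rotation u).toHomeomorph.measurableEmbedding G S]
      _ = ∫ z in S, a • G z := by simp only [hpre, rotation_apply, hG]
      _ = a • ∫ z in S, G z := integral_smul a _
  have h' : (1 - a) • ∫ z in S, G z = 0 := by rw [sub_smul, one_smul, ← h, sub_self]
  exact (smul_eq_zero.1 h').resolve_left (sub_ne_zero.2 ha.symm)

theorem stmt15_general (κ : ℝ) (ν : ℝ) (m n n' : ℕ) (hnn : n ≠ n') :
    ∫ z in {z : ℂ | 0 < 1 + κ * Complex.normSq z},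
        (nablaChain κ m ν
            (fun w => (((1 + κ * Complex.normSq w) ^ (-(ν / κ + m)) : ℝ) : ℂ) * w ^ n) z *
          (starRingEnd ℂ)
            (nablaChain κ m ν
              (fun w => (((1 + κ * Complex.normSq w) ^ (-(ν / κ + m)) : ℝ) : ℂ) * w ^ n') z) *
          (((1 + κ * Complex.normSq z) ^ (-2 : ℝ) : ℝ) : ℂ)) ∂volume = 0 := by
  have hd : (n : ℤ) - n' ≠ 0 := sub_ne_zero.2 (Nat.cast_injective.ne hnn)
  obtain ⟨u, hu⟩ := Circle.exists_coe_zpow_ne_one hd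
  refine setIntegral_eq_zero_of_circle_mul u hu (by simp) fun z => ?_
  set g : ℝ → ℂ := fun t => (((1 + κ * t) ^ (-(ν / κ + m)) : ℝ) : ℂ)
  rw [nablaChain_circle_mul_of_homogeneous κ m ν (radial_mul_pow_circle_mul g n u),
    nablaChain_circle_mul_of_homogeneous κ m ν (radial_mul_pow_circle_mul g n' u), map_mul,
    map_mul, Circle.normSq_coe, one_mul, map_zpow₀, ← Circle.coe_inv_eq_conj,
    Circle.coe_inv, inv_zpow', smul_eq_mul, show (n : ℤ) - n' = (n - m) + -(n' - m) by ring,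
    zpow_add₀ (Circle.coe_ne_zero u)]
  ring

theorem stmt15 (κ : ℝ) (hκ : κ ≠ 0) (ν : ℝ) (m n n' : ℕ) (hnn : n ≠ n')
    (hint : MeasureTheory.IntegrableOn
      (fun z : ℂ =>
        nablaChain κ m ν
            (fun w => (((1 + κ * Complex.normSq w) ^ (-(ν / κ + m)) : ℝ) : ℂ) * w ^ n) z *
          (starRingEnd ℂ)
            (nablaChain κ m ν
              (fun w => (((1 + κ * Complex.normSq w) ^ (-(ν / κ + m)) : ℝ) : ℂ) * w ^ n') z) *
          (((1 + κ * Complex.normSq z) ^ (-2 : ℝ) : ℝ) : ℂ))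
      {z : ℂ | 0 < 1 + κ * Complex.normSq z} volume) :
    ∫ z in {z : ℂ | 0 < 1 + κ * Complex.normSq z},
        (nablaChain κ m ν
            (fun w => (((1 + κ * Complex.normSq w) ^ (-(ν / κ + m)) : ℝ) : ℂ) * w ^ n) z *
          (starRingEnd ℂ)
            (nablaChain κ m ν
              (fun w => (((1 + κ * Complex.normSq w) ^ (-(ν / κ + m)) : ℝ) : ℂ) * w ^ n') z) *
          (((1 + κ * Complex.normSq z) ^ (-2 : ℝ) : ℝ) : ℂ)) ∂volume = 0 :=
  stmt15_general κ ν m n n' hnn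
end
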